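/- For each ℓ>0, the map (θ,a) ↦ (R(θ,a,ℓ), V(θ,a,ℓ)) is a bijection from ℝ×(0,∞) onto the domain D_ℓ := {(r,v) ∈ (0,∞)×ℝ : v² − m/r + ℓ/r² > 0}, and its inverse is the map (r,v) ↦ (Θ(r,v,ℓ), 𝒜(r,v,ℓ)), where 𝒜(r,v,ℓ) := √(v² − m/r + ℓ/r²) and Θ(r,v,ℓ) := sgn(v)·p(𝒜,ℓ)·G_{κ(𝒜,ℓ)}(r/p(𝒜,ℓ) + κ(𝒜,ℓ)) with 𝒜 = 𝒜(r,v,ℓ). (Here Θ is well defined since r/p(𝒜,ℓ) + κ(𝒜,ℓ) ≥ 1 for every (r,v) ∈ D_ℓ.) -/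

import Mathlib

noncomputable section

open Real MeasureTheory Set Filter

/-- Japanese bracket `⟨x⟩ := √(2+x²)`. -/
def jb (x : ℝ) : ℝ := Real.sqrt (2 + x ^ 2)

/-- `κ(a,ℓ) := (1 + 4a²ℓ/m²)^{-1/2}`. -/
def kpa (m a ℓ : ℝ) : ℝ := 1 / Real.sqrt (1 + 4 * a ^ 2 * ℓ / m ^ 2)

/-- `p(a,ℓ) := m / (2a²κ(a,ℓ))`. -/
def pfn (m a ℓ : ℝ) : ℝ := m / (2 * a ^ 2 * kpa m a ℓ)

/-- `r₀(a,ℓ) := p(a,ℓ)(1-κ(a,ℓ))`. -/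
def rZero (m a ℓ : ℝ) : ℝ := pfn m a ℓ * (1 - kpa m a ℓ)

/-- `G_κ(y) := √(y²-1) - κ ln(y + √(y²-1))`. -/
def Gf (κ y : ℝ) : ℝ := Real.sqrt (y ^ 2 - 1) - κ * Real.log (y + Real.sqrt (y ^ 2 - 1))

/-- `H_κ : [0,∞) → [1,∞)`, the inverse of `G_κ` on `[1,∞)`. -/
def Hf (κ x : ℝ) : ℝ := Function.invFunOn (Gf κ) (Set.Ici 1) x

/-- Inverse hyperbolic cosine `arcosh x = ln (x + √(x²-1))`. -/
def acosh (x : ℝ) : ℝ := Real.log (x + Real.sqrt (x ^ 2 - 1))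

/-- The radial function `R(θ,a,ℓ)`. -/
def Rf (m θ a ℓ : ℝ) : ℝ :=
  pfn m a ℓ * Hf (kpa m a ℓ) (|θ| / pfn m a ℓ) - pfn m a ℓ * kpa m a ℓ

/-- The radial velocity `V(θ,a,ℓ)`. -/
def Vf (m θ a ℓ : ℝ) : ℝ :=
  Real.sign θ * a *
    Real.sqrt (1 + m / (a ^ 2 * Rf m θ a ℓ) - ℓ / (a ^ 2 * (Rf m θ a ℓ) ^ 2))

/-- The dynamical radial function `R̃(t,θ,a,ℓ) = R(θ+at,a,ℓ)`. -/
def Rtil (m t θ a ℓ : ℝ) : ℝ := Rf m (θ + a * t) a ℓ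

/-- The action `𝒜(r,v,ℓ) = √(v² - m/r + ℓ/r²)`. -/
def Acal (m r v ℓ : ℝ) : ℝ := Real.sqrt (v ^ 2 - m / r + ℓ / r ^ 2)

/-- The angle `Θ(r,v,ℓ) = sgn(v)·p(𝒜,ℓ)·G_{κ(𝒜,ℓ)}(r/p(𝒜,ℓ) + κ(𝒜,ℓ))`. -/
def Theta (m r v ℓ : ℝ) : ℝ :=
  Real.sign v * pfn m (Acal m r v ℓ) ℓ *
    Gf (kpa m (Acal m r v ℓ) ℓ) (r / pfn m (Acal m r v ℓ) ℓ + kpa m (Acal m r v ℓ) ℓ)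

/-- The phase space `ℝ×(0,∞)×(0,∞)` in the variables `(θ,a,ℓ)`. -/
def phaseSet : Set (ℝ × ℝ × ℝ) := Set.univ ×ˢ Set.Ioi 0 ×ˢ Set.Ioi 0

/-- The gravitational field
`F(t,r) = -(1/r²)·∫∫∫ 1_{R(θ+ta,a,ℓ) ≤ r} γ(θ,a,ℓ)² dθ da dℓ`. -/
def gravF (m : ℝ) (γ : ℝ × ℝ × ℝ → ℝ) (t r : ℝ) : ℝ :=
  -(1 / r ^ 2) *
    (∫⁻ x in {x : ℝ × ℝ × ℝ | Rf m (x.1 + t * x.2.1) x.2.1 x.2.2 ≤ r},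
        ENNReal.ofReal ((γ x) ^ 2) ∂(volume.restrict phaseSet)).toReal

/-- The effective gravitational field
`F_eff(t,r) = -(1/r²)·∫∫∫ 1_{at ≤ r} γ(θ,a,ℓ)² dθ da dℓ`. -/
def gravFeff (γ : ℝ × ℝ × ℝ → ℝ) (t r : ℝ) : ℝ :=
  -(1 / r ^ 2) *
    (∫⁻ x in {x : ℝ × ℝ × ℝ | x.2.1 * t ≤ r},
        ENNReal.ofReal ((γ x) ^ 2) ∂(volume.restrict phaseSet)).toReal

/-!
With `κ = κ(a,ℓ)`, `p = p(a,ℓ)` and `y = r/p + κ`, energy conservation `v² = a² + m/r - ℓ/r²`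
becomes `v² = (a p / r)² (y² - 1)`, so the points of `D_ℓ` with `𝒜 = a` are those with `y ≥ 1`,
and `R(θ,a,ℓ)` is the radius solving `p G_κ(y) = |θ|`. On `[1,∞)`,
`G_κ = (sinh - κ·id) ∘ arcosh`, and `sinh - κ·id` is strictly increasing and unbounded for
`κ < 1`, so `G_κ` is a bijection `[1,∞) → [0,∞)` with inverse `H_κ`. Finally `v = 0` exactly when
`y = 1`, i.e. when `θ = 0`, which lets the signs of `θ` and `v` recover each other.
-/

section SignedMagnitude

variable {x c : ℝ}

lemma Real.abs_sign_mul (hc : 0 ≤ c) (hxc : 0 < c ↔ x ≠ 0) : |Real.sign x * c| = c := by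
  rcases eq_or_ne x 0 with rfl | hx
  · rw [Real.sign_zero, zero_mul, abs_zero]
    exact (le_antisymm (not_lt.1 (mt hxc.1 (not_not.2 rfl))) hc).symm
  · rcases Real.sign_apply_eq_of_ne_zero x hx with h | h <;> simp [h, abs_of_nonneg hc]

lemma Real.sign_sign_mul_mul_abs (hxc : 0 < c ↔ x ≠ 0) :
    Real.sign (Real.sign x * c) * |x| = x := by
  rcases lt_trichotomy x 0 with hx | rfl | hx
  · rw [Real.sign_of_neg hx, Real.sign_of_neg (by linarith [hxc.2 hx.ne]), abs_of_neg hx]; ring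
  · rw [abs_zero, mul_zero]
  · rw [Real.sign_of_pos hx, one_mul, Real.sign_of_pos (hxc.2 hx.ne'), abs_of_pos hx, one_mul]

end SignedMagnitude

section Gf

variable {κ : ℝ}

lemma Gf_eq_sinh_arcosh_sub {y : ℝ} (hy : 1 ≤ y) :
    Gf κ y = sinh (arcosh y) - κ * arcosh y := by
  rw [sinh_arcosh hy]; rfl

lemma hasDerivAt_sinh_sub_mul_self (t : ℝ) :
    HasDerivAt (fun t => sinh t - κ * t) (cosh t - κ) t := by
  have := (hasDerivAt_sinh t).sub ((hasDerivAt_id t).const_mul κ)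
  rwa [mul_one] at this

lemma strictMono_sinh_sub_mul_self (hκ : κ < 1) : StrictMono fun t => sinh t - κ * t :=
  strictMono_of_hasDerivAt_pos hasDerivAt_sinh_sub_mul_self
    fun t => by linarith [one_le_cosh t]

lemma bijOn_sinh_sub_mul_self (hκ : κ < 1) :
    BijOn (fun t => sinh t - κ * t) (Ici 0) (Ici 0) := by
  have hmono := strictMono_sinh_sub_mul_self hκ
  have hcont : Continuous fun t => sinh t - κ * t := by fun_prop
  refine ⟨fun t ht => ?_, hmono.injective.injOn, fun x hx => ?_⟩
  · simpa using hmono.monotone (mem_Ici.1 ht)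
  · set T := x / (1 - κ)
    have hT : 0 ≤ T := div_nonneg hx (by linarith)
    -- `sinh T ≥ T`, so `sinh T - κ T ≥ (1 - κ) T = x`
    have hxT : x ≤ sinh T - κ * T := by
      have : x = (1 - κ) * T := (mul_div_cancel₀ x (by linarith : 1 - κ ≠ 0)).symm
      nlinarith [self_le_sinh_iff.2 hT]
    obtain ⟨t, ht, rfl⟩ := intermediate_value_Icc hT hcont.continuousOn
      (by simpa using ⟨mem_Ici.1 hx, hxT⟩)
    exact ⟨t, ht.1, rfl⟩

lemma bijOn_Gf (hκ : κ < 1) : BijOn (Gf κ) (Ici 1) (Ici 0) :=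
  ((bijOn_sinh_sub_mul_self hκ).comp arcosh_bijOn).congr
    fun _ hy => (Gf_eq_sinh_arcosh_sub hy).symm

lemma Gf_pos_iff (hκ : κ < 1) {y : ℝ} (hy : 1 ≤ y) : 0 < Gf κ y ↔ 1 < y := by
  have hmono := (strictMono_sinh_sub_mul_self hκ).lt_iff_lt (a := 0) (b := arcosh y)
  have harcosh := arcosh_lt_arcosh one_pos (by linarith : (0 : ℝ) < y)
  rw [arcosh_zero] at harcosh
  simpa [Gf_eq_sinh_arcosh_sub hy, harcosh] using hmono

lemma one_le_Hf (hκ : κ < 1) {x : ℝ} (hx : 0 ≤ x) : 1 ≤ Hf κ x :=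
  (bijOn_Gf hκ).surjOn.mapsTo_invFunOn hx

lemma Gf_Hf (hκ : κ < 1) {x : ℝ} (hx : 0 ≤ x) : Gf κ (Hf κ x) = x :=
  (bijOn_Gf hκ).surjOn.rightInvOn_invFunOn hx

lemma Hf_Gf (hκ : κ < 1) {y : ℝ} (hy : 1 ≤ y) : Hf κ (Gf κ y) = y :=
  (bijOn_Gf hκ).injOn.leftInvOn_invFunOn hy

end Gf

section Parameters

variable {m a ℓ : ℝ}

lemma inv_kpa_sq (hℓ : 0 ≤ ℓ) : (kpa m a ℓ ^ 2)⁻¹ = 1 + 4 * a ^ 2 * ℓ / m ^ 2 := by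
  rw [kpa, one_div, inv_pow, inv_inv, sq_sqrt (by positivity)]

lemma kpa_pos (hℓ : 0 ≤ ℓ) : 0 < kpa m a ℓ := by
  unfold kpa; positivity

lemma kpa_lt_one (hm : m ≠ 0) (ha : a ≠ 0) (hℓ : 0 < ℓ) : kpa m a ℓ < 1 := by
  have hκ := kpa_pos (m := m) (a := a) hℓ.le
  have h : 1 < (kpa m a ℓ ^ 2)⁻¹ := by
    rw [inv_kpa_sq hℓ.le, lt_add_iff_pos_right]
    positivity
  rw [one_lt_inv₀ (by positivity), sq_lt_one_iff₀ hκ.le] at h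
  exact h

lemma pfn_pos (hm : 0 < m) (hℓ : 0 ≤ ℓ) (ha : a ≠ 0) : 0 < pfn m a ℓ := by
  have := kpa_pos (m := m) (a := a) hℓ
  unfold pfn; positivity

lemma two_mul_sq_mul_kpa_mul_pfn (hℓ : 0 ≤ ℓ) (ha : a ≠ 0) :
    2 * a ^ 2 * kpa m a ℓ * pfn m a ℓ = m := by
  have := (kpa_pos (m := m) (a := a) hℓ).ne'
  unfold pfn; field_simp

lemma sq_mul_pfn_sq_mul_one_sub_kpa_sq (hm : m ≠ 0) (hℓ : 0 ≤ ℓ) (ha : a ≠ 0) :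
    a ^ 2 * pfn m a ℓ ^ 2 * (1 - kpa m a ℓ ^ 2) = ℓ := by
  have hκ := (kpa_pos (m := m) (a := a) hℓ).ne'
  have h := inv_kpa_sq (m := m) (a := a) hℓ
  unfold pfn
  field_simp at h ⊢
  linear_combination h

end Parameters

/-- Energy conservation on the orbit of asymptotic speed `a`: the squared radial velocity at
radius `r` is `a² + m/r - ℓ/r²`. -/
def radialSpeedSq (m a ℓ r : ℝ) : ℝ := a ^ 2 + m / r - ℓ / r ^ 2

section RadialSpeed

variable {m a ℓ r : ℝ}

lemma radialSpeedSq_eq (hm : m ≠ 0) (hℓ : 0 ≤ ℓ) (ha : a ≠ 0) (hr : r ≠ 0) :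
    radialSpeedSq m a ℓ r =
      (a * pfn m a ℓ / r) ^ 2 * ((r / pfn m a ℓ + kpa m a ℓ) ^ 2 - 1) := by
  have hp : pfn m a ℓ ≠ 0 := by
    rw [← two_mul_sq_mul_kpa_mul_pfn (m := m) hℓ ha] at hm
    exact right_ne_zero_of_mul hm
  have hmκp := two_mul_sq_mul_kpa_mul_pfn (m := m) hℓ ha
  have hℓκp := sq_mul_pfn_sq_mul_one_sub_kpa_sq hm hℓ ha
  generalize kpa m a ℓ = κ at *
  generalize pfn m a ℓ = p at *
  subst hmκp hℓκp
  rw [radialSpeedSq]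
  field_simp
  ring

lemma radialSpeedSq_nonneg_iff (hm : 0 < m) (hℓ : 0 ≤ ℓ) (ha : a ≠ 0) (hr : 0 < r) :
    0 ≤ radialSpeedSq m a ℓ r ↔ 1 ≤ r / pfn m a ℓ + kpa m a ℓ := by
  have hp := pfn_pos hm hℓ ha
  have hy : 0 ≤ r / pfn m a ℓ + kpa m a ℓ := by have := kpa_pos (m := m) (a := a) hℓ; positivity
  rw [radialSpeedSq_eq hm.ne' hℓ ha hr.ne', mul_nonneg_iff_of_pos_left (by positivity), sub_nonneg,
    one_le_sq_iff₀ hy]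

lemma radialSpeedSq_pos_iff (hm : 0 < m) (hℓ : 0 ≤ ℓ) (ha : a ≠ 0) (hr : 0 < r) :
    0 < radialSpeedSq m a ℓ r ↔ 1 < r / pfn m a ℓ + kpa m a ℓ := by
  have hp := pfn_pos hm hℓ ha
  have hy : 0 ≤ r / pfn m a ℓ + kpa m a ℓ := by have := kpa_pos (m := m) (a := a) hℓ; positivity
  rw [radialSpeedSq_eq hm.ne' hℓ ha hr.ne', mul_pos_iff_of_pos_left (by positivity), sub_pos,
    one_lt_sq_iff₀ hy]

lemma Vf_eq_sign_mul_sqrt (θ : ℝ) (ha : 0 < a) :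
    Vf m θ a ℓ = Real.sign θ * √(radialSpeedSq m a ℓ (Rf m θ a ℓ)) := by
  rw [Vf, mul_assoc, radialSpeedSq, ← sqrt_sq ha.le, ← sqrt_mul (sq_nonneg a), sqrt_sq ha.le]
  congr 3
  field_simp

end RadialSpeed

section Forward

variable {m a ℓ : ℝ} (θ : ℝ)

lemma div_pfn_add_kpa_Rf (hm : 0 < m) (hℓ : 0 ≤ ℓ) (ha : a ≠ 0) :
    Rf m θ a ℓ / pfn m a ℓ + kpa m a ℓ = Hf (kpa m a ℓ) (|θ| / pfn m a ℓ) := by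
  have hp := (pfn_pos hm hℓ ha).ne'
  rw [Rf]
  field_simp
  ring

lemma Rf_pos (hm : 0 < m) (hℓ : 0 < ℓ) (ha : a ≠ 0) : 0 < Rf m θ a ℓ := by
  have hp := pfn_pos hm hℓ.le ha
  have hκ := kpa_lt_one hm.ne' ha hℓ
  have hy := one_le_Hf hκ (div_nonneg (abs_nonneg θ) hp.le)
  rw [← div_pfn_add_kpa_Rf θ hm hℓ.le ha] at hy
  exact (div_pos_iff_of_pos_right hp).1 (by linarith)

lemma radialSpeedSq_Rf_nonneg (hm : 0 < m) (hℓ : 0 < ℓ) (ha : a ≠ 0) :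
    0 ≤ radialSpeedSq m a ℓ (Rf m θ a ℓ) := by
  rw [radialSpeedSq_nonneg_iff hm hℓ.le ha (Rf_pos θ hm hℓ ha), div_pfn_add_kpa_Rf θ hm hℓ.le ha]
  exact one_le_Hf (kpa_lt_one hm.ne' ha hℓ) (div_nonneg (abs_nonneg θ) (pfn_pos hm hℓ.le ha).le)

lemma radialSpeedSq_Rf_pos_iff (hm : 0 < m) (hℓ : 0 < ℓ) (ha : a ≠ 0) :
    0 < radialSpeedSq m a ℓ (Rf m θ a ℓ) ↔ θ ≠ 0 := by
  have hp := pfn_pos hm hℓ.le ha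
  have hκ := kpa_lt_one hm.ne' ha hℓ
  have hx : 0 ≤ |θ| / pfn m a ℓ := div_nonneg (abs_nonneg θ) hp.le
  rw [radialSpeedSq_pos_iff hm hℓ.le ha (Rf_pos θ hm hℓ ha), div_pfn_add_kpa_Rf θ hm hℓ.le ha,
    ← Gf_pos_iff hκ (one_le_Hf hκ hx), Gf_Hf hκ hx, div_pos_iff_of_pos_right hp, abs_pos]

lemma sq_Vf_sub_add (hm : 0 < m) (hℓ : 0 < ℓ) (ha : 0 < a) :
    Vf m θ a ℓ ^ 2 - m / Rf m θ a ℓ + ℓ / Rf m θ a ℓ ^ 2 = a ^ 2 := by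
  have hE := radialSpeedSq_Rf_nonneg θ hm hℓ ha.ne'
  rw [← sq_abs, Vf_eq_sign_mul_sqrt θ ha, Real.abs_sign_mul (sqrt_nonneg _)
    (sqrt_pos.trans (radialSpeedSq_Rf_pos_iff θ hm hℓ ha.ne')), sq_sqrt hE, radialSpeedSq]
  ring

lemma Acal_Rf_Vf (hm : 0 < m) (hℓ : 0 < ℓ) (ha : 0 < a) :
    Acal m (Rf m θ a ℓ) (Vf m θ a ℓ) ℓ = a := by
  rw [Acal, sq_Vf_sub_add θ hm hℓ ha, sqrt_sq ha.le]

lemma Theta_Rf_Vf (hm : 0 < m) (hℓ : 0 < ℓ) (ha : 0 < a) :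
    Theta m (Rf m θ a ℓ) (Vf m θ a ℓ) ℓ = θ := by
  have hp := pfn_pos hm hℓ.le ha.ne'
  rw [Theta, Acal_Rf_Vf θ hm hℓ ha, div_pfn_add_kpa_Rf θ hm hℓ.le ha.ne',
    Gf_Hf (kpa_lt_one hm.ne' ha.ne' hℓ) (div_nonneg (abs_nonneg θ) hp.le), mul_assoc,
    mul_div_cancel₀ _ hp.ne', Vf_eq_sign_mul_sqrt θ ha]
  exact Real.sign_sign_mul_mul_abs (sqrt_pos.trans (radialSpeedSq_Rf_pos_iff θ hm hℓ ha.ne'))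

end Forward

section Backward

variable {m ℓ r v : ℝ}

lemma Acal_pos (hD : 0 < v ^ 2 - m / r + ℓ / r ^ 2) : 0 < Acal m r v ℓ :=
  sqrt_pos.2 hD

lemma radialSpeedSq_Acal (hD : 0 ≤ v ^ 2 - m / r + ℓ / r ^ 2) :
    radialSpeedSq m (Acal m r v ℓ) ℓ r = v ^ 2 := by
  rw [radialSpeedSq, Acal, sq_sqrt hD]
  ring

lemma one_le_div_pfn_add_kpa_Acal (hm : 0 < m) (hℓ : 0 < ℓ) (hr : 0 < r)
    (hD : 0 < v ^ 2 - m / r + ℓ / r ^ 2) :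
    1 ≤ r / pfn m (Acal m r v ℓ) ℓ + kpa m (Acal m r v ℓ) ℓ := by
  rw [← radialSpeedSq_nonneg_iff hm hℓ.le (Acal_pos hD).ne' hr, radialSpeedSq_Acal hD.le]
  positivity

lemma Gf_Acal_pos_iff (hm : 0 < m) (hℓ : 0 < ℓ) (hr : 0 < r)
    (hD : 0 < v ^ 2 - m / r + ℓ / r ^ 2) :
    0 < Gf (kpa m (Acal m r v ℓ) ℓ) (r / pfn m (Acal m r v ℓ) ℓ + kpa m (Acal m r v ℓ) ℓ) ↔
      v ≠ 0 := by
  have hA := (Acal_pos hD).ne'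
  rw [Gf_pos_iff (kpa_lt_one hm.ne' hA hℓ) (one_le_div_pfn_add_kpa_Acal hm hℓ hr hD),
    ← radialSpeedSq_pos_iff hm hℓ.le hA hr, radialSpeedSq_Acal hD.le, sq_pos_iff]

lemma Rf_Theta_Acal (hm : 0 < m) (hℓ : 0 < ℓ) (hr : 0 < r)
    (hD : 0 < v ^ 2 - m / r + ℓ / r ^ 2) :
    Rf m (Theta m r v ℓ) (Acal m r v ℓ) ℓ = r := by
  have hA := (Acal_pos hD).ne'
  have hp := pfn_pos hm hℓ.le hA
  have hy := one_le_div_pfn_add_kpa_Acal hm hℓ hr hD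
  have hG := (bijOn_Gf (kpa_lt_one hm.ne' hA hℓ)).mapsTo hy
  have habs : |Theta m r v ℓ| = pfn m (Acal m r v ℓ) ℓ *
      Gf (kpa m (Acal m r v ℓ) ℓ) (r / pfn m (Acal m r v ℓ) ℓ + kpa m (Acal m r v ℓ) ℓ) := by
    rw [Theta, mul_assoc]
    exact Real.abs_sign_mul (mul_nonneg hp.le hG)
      ((mul_pos_iff_of_pos_left hp).trans (Gf_Acal_pos_iff hm hℓ hr hD))
  rw [Rf, habs, mul_div_cancel_left₀ _ hp.ne', Hf_Gf (kpa_lt_one hm.ne' hA hℓ) hy]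
  field_simp
  ring

lemma Vf_Theta_Acal (hm : 0 < m) (hℓ : 0 < ℓ) (hr : 0 < r)
    (hD : 0 < v ^ 2 - m / r + ℓ / r ^ 2) :
    Vf m (Theta m r v ℓ) (Acal m r v ℓ) ℓ = v := by
  have hp := pfn_pos hm hℓ.le (Acal_pos hD).ne'
  rw [Vf_eq_sign_mul_sqrt _ (Acal_pos hD), Rf_Theta_Acal hm hℓ hr hD, radialSpeedSq_Acal hD.le,
    sqrt_sq_eq_abs, Theta, mul_assoc]
  exact Real.sign_sign_mul_mul_abs
    ((mul_pos_iff_of_pos_left hp).trans (Gf_Acal_pos_iff hm hℓ hr hD))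

end Backward

/-- for each `ℓ>0`, `(θ,a) ↦ (R(θ,a,ℓ),V(θ,a,ℓ))` is a bijection from
`ℝ×(0,∞)` onto `D_ℓ = {(r,v) : r>0, v²-m/r+ℓ/r²>0}` with inverse `(Θ,𝒜)`. -/
theorem statement1 (m : ℝ) (hm : 0 < m) (ℓ : ℝ) (hℓ : 0 < ℓ) :
    Set.BijOn (fun q : ℝ × ℝ => (Rf m q.1 q.2 ℓ, Vf m q.1 q.2 ℓ))
      (Set.univ ×ˢ Set.Ioi 0)
      {p : ℝ × ℝ | 0 < p.1 ∧ 0 < p.2 ^ 2 - m / p.1 + ℓ / p.1 ^ 2} ∧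
    (∀ p : ℝ × ℝ, (0 < p.1 ∧ 0 < p.2 ^ 2 - m / p.1 + ℓ / p.1 ^ 2) →
      1 ≤ p.1 / pfn m (Acal m p.1 p.2 ℓ) ℓ + kpa m (Acal m p.1 p.2 ℓ) ℓ) ∧
    (∀ q : ℝ × ℝ, q ∈ (Set.univ ×ˢ Set.Ioi 0 : Set (ℝ × ℝ)) →
      (Theta m (Rf m q.1 q.2 ℓ) (Vf m q.1 q.2 ℓ) ℓ,
        Acal m (Rf m q.1 q.2 ℓ) (Vf m q.1 q.2 ℓ) ℓ) = q) ∧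
    (∀ p : ℝ × ℝ, (0 < p.1 ∧ 0 < p.2 ^ 2 - m / p.1 + ℓ / p.1 ^ 2) →
      (Rf m (Theta m p.1 p.2 ℓ) (Acal m p.1 p.2 ℓ) ℓ,
       Vf m (Theta m p.1 p.2 ℓ) (Acal m p.1 p.2 ℓ) ℓ) = p) := by
  have hleft : LeftInvOn (fun p : ℝ × ℝ => (Theta m p.1 p.2 ℓ, Acal m p.1 p.2 ℓ))
      (fun q : ℝ × ℝ => (Rf m q.1 q.2 ℓ, Vf m q.1 q.2 ℓ)) (univ ×ˢ Ioi 0) := fun q hq =>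
    Prod.ext (Theta_Rf_Vf q.1 hm hℓ hq.2) (Acal_Rf_Vf q.1 hm hℓ hq.2)
  have hright : RightInvOn (fun p : ℝ × ℝ => (Theta m p.1 p.2 ℓ, Acal m p.1 p.2 ℓ))
      (fun q : ℝ × ℝ => (Rf m q.1 q.2 ℓ, Vf m q.1 q.2 ℓ))
      {p : ℝ × ℝ | 0 < p.1 ∧ 0 < p.2 ^ 2 - m / p.1 + ℓ / p.1 ^ 2} := fun p hp =>
    Prod.ext (Rf_Theta_Acal hm hℓ hp.1 hp.2) (Vf_Theta_Acal hm hℓ hp.1 hp.2)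
  have hmaps : MapsTo (fun q : ℝ × ℝ => (Rf m q.1 q.2 ℓ, Vf m q.1 q.2 ℓ)) (univ ×ˢ Ioi 0)
      {p : ℝ × ℝ | 0 < p.1 ∧ 0 < p.2 ^ 2 - m / p.1 + ℓ / p.1 ^ 2} := fun q hq =>
    ⟨Rf_pos q.1 hm hℓ (ne_of_gt hq.2), by rw [sq_Vf_sub_add q.1 hm hℓ hq.2]; exact pow_pos hq.2 2⟩
  refine ⟨InvOn.bijOn ⟨hleft, hright⟩ hmaps fun p hp => ⟨trivial, Acal_pos hp.2⟩,
    fun p hp => one_le_div_pfn_add_kpa_Acal hm hℓ hp.1 hp.2, hleft, hright⟩
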